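/- Correctness of the phase-parallel LIS frontiers: define sets of indices of the sequence A inductively by letting F₁ be the set of prefix-min indices of A, and for r ≥ 1 letting F_{r+1} be the set of indices i not in F₁ ∪ ⋯ ∪ F_r such that A(i) ≤ A(j) for every j < i with j not in F₁ ∪ ⋯ ∪ F_r (the prefix-min indices after removing the first r frontiers). Then for every r ≥ 1, F_r equals the set of indices i with rank(i) = r. -/

import Mathlib

/-- `l` is a strictly increasing subsequence of `A` ending at index `i`. -/
def IsIncEndingAt {n : ℕ} {α : Type*} [LinearOrder α] (A : Fin n → α)
    (l : List (Fin n)) (i : Fin n) : Prop :=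
  l.Chain' (· < ·) ∧ (l.map A).Chain' (· < ·) ∧ l.getLast? = some i

/-- The rank of index `i`: the maximum length of an increasing subsequence of `A`
ending at `i`. -/
noncomputable def lisRank {n : ℕ} {α : Type*} [LinearOrder α] (A : Fin n → α)
    (i : Fin n) : ℕ :=
  sSup {m : ℕ | ∃ l : List (Fin n), IsIncEndingAt A l i ∧ l.length = m}

/-!
The rank satisfies a recursion of the same shape as the frontiers: `rank i = r + 1` exactly
when `rank i > r` and `A i` is at most every earlier value of rank `> r`. Indeed, an earlier
smaller value of rank `≥ r + 1` would extend to rank `≥ r + 2` at `i`, while an optimal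
subsequence ending at `i` passes through an earlier smaller index of rank `≥ rank i - 1`.
By strong induction on `r`, the indices outside `F 1 ∪ ⋯ ∪ F r` are exactly those of rank
`> r`, so the condition defining `F (r + 1)` is this recursion.
-/

section LisRank

variable {n : ℕ} {α : Type*} [LinearOrder α] {A : Fin n → α}

theorem isIncEndingAt_iff {l : List (Fin n)} {i : Fin n} :
    IsIncEndingAt A l i ↔
      l.IsChain (· < ·) ∧ (l.map A).IsChain (· < ·) ∧ l.getLast? = some i :=
  Iff.rfl

theorem isIncEndingAt_append_singleton_iff {l : List (Fin n)} {i j : Fin n}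
    (hl : l.getLast? = some j) :
    IsIncEndingAt A (l ++ [i]) i ↔ IsIncEndingAt A l j ∧ j < i ∧ A j < A i := by
  simp only [isIncEndingAt_iff, List.isChain_append, List.IsChain.singleton, hl,
    Option.mem_def, Option.some.injEq, List.head?_cons, forall_eq', true_and, List.map_append,
    List.map_cons, List.map_nil, List.getLast?_map, Option.map_some, List.getLast?_append,
    List.getLast?_singleton, Option.or_some, Option.getD_some, and_true]
  tauto

theorem IsIncEndingAt.length_le {l : List (Fin n)} {i : Fin n} (hl : IsIncEndingAt A l i) :
    l.length ≤ n := by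
  have hnodup : l.Nodup := (List.isChain_iff_pairwise.mp hl.1).imp ne_of_lt
  simpa using hnodup.length_le_card

variable (A) in
theorem bddAbove_lisRank_set (i : Fin n) :
    BddAbove {m : ℕ | ∃ l : List (Fin n), IsIncEndingAt A l i ∧ l.length = m} :=
  ⟨n, by rintro m ⟨l, hl, rfl⟩; exact hl.length_le⟩

theorem IsIncEndingAt.length_le_lisRank {l : List (Fin n)} {i : Fin n}
    (hl : IsIncEndingAt A l i) : l.length ≤ lisRank A i :=
  le_csSup (bddAbove_lisRank_set A i) ⟨l, hl, rfl⟩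

variable (A) in
theorem isIncEndingAt_singleton (i : Fin n) : IsIncEndingAt A [i] i :=
  ⟨List.isChain_singleton _, List.isChain_singleton _, rfl⟩

variable (A) in
theorem lisRank_pos (i : Fin n) : 0 < lisRank A i :=
  (isIncEndingAt_singleton A i).length_le_lisRank

variable (A) in
theorem exists_isIncEndingAt_length_eq_lisRank (i : Fin n) :
    ∃ l : List (Fin n), IsIncEndingAt A l i ∧ l.length = lisRank A i :=
  Nat.sSup_mem (s := {m | ∃ l, IsIncEndingAt A l i ∧ l.length = m})
    ⟨1, [i], isIncEndingAt_singleton A i, rfl⟩ (bddAbove_lisRank_set A i)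

theorem lisRank_lt_lisRank {i j : Fin n} (hji : j < i) (hA : A j < A i) :
    lisRank A j < lisRank A i := by
  obtain ⟨l, hl, hlen⟩ := exists_isIncEndingAt_length_eq_lisRank A j
  have hli : IsIncEndingAt A (l ++ [i]) i :=
    (isIncEndingAt_append_singleton_iff hl.2.2).mpr ⟨hl, hji, hA⟩
  simpa [hlen] using hli.length_le_lisRank

theorem exists_lt_lisRank_le_succ {i : Fin n} (h : 1 < lisRank A i) :
    ∃ j < i, A j < A i ∧ lisRank A i ≤ lisRank A j + 1 := by
  obtain ⟨l, hl, hlen⟩ := exists_isIncEndingAt_length_eq_lisRank A i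
  obtain ⟨l', rfl⟩ := List.getLast?_eq_some_iff.mp hl.2.2
  cases hj : l'.getLast? with
  | none =>
    rw [List.getLast?_eq_none_iff.mp hj] at hlen
    simp only [List.nil_append, List.length_singleton] at hlen
    omega
  | some j =>
    obtain ⟨hl', hji, hA⟩ := (isIncEndingAt_append_singleton_iff hj).mp hl
    refine ⟨j, hji, hA, ?_⟩
    have := hl'.length_le_lisRank
    simp only [List.length_append, List.length_singleton] at hlen
    omega

theorem lisRank_eq_succ_iff (r : ℕ) (i : Fin n) :
    lisRank A i = r + 1 ↔ r < lisRank A i ∧ ∀ j < i, r < lisRank A j → A i ≤ A j := by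
  constructor
  · intro hi
    refine ⟨by omega, fun j hji hj => le_of_not_gt fun hA => ?_⟩
    have := lisRank_lt_lisRank hji hA
    omega
  · rintro ⟨hi, hmin⟩
    by_contra hne
    obtain ⟨j, hji, hA, hle⟩ := exists_lt_lisRank_le_succ (A := A) (i := i) (by omega)
    exact (hmin j hji (by omega)).not_gt hA

theorem forall_notMem_iff_lt_lisRank {F : ℕ → Set (Fin n)} {r : ℕ}
    (hF : ∀ s, 1 ≤ s → s ≤ r → F s = {i | lisRank A i = s}) (i : Fin n) :
    (∀ s, 1 ≤ s → s ≤ r → i ∉ F s) ↔ r < lisRank A i := by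
  constructor
  · intro hi
    by_contra! hle
    exact hi _ (lisRank_pos A i) hle (by rw [hF _ (lisRank_pos A i) hle]; rfl)
  · intro hi s hs hsr hmem
    rw [hF s hs hsr, Set.mem_ofPred_eq] at hmem
    omega

end LisRank

/-- Correctness of the phase-parallel LIS frontiers: if `F 1` is the set of
prefix-min indices of `A`, and for each `r ≥ 1`, `F (r+1)` is the set of indices
not in `F 1 ∪ ⋯ ∪ F r` that are prefix-min after removing `F 1 ∪ ⋯ ∪ F r`,
then for every `r ≥ 1`, `F r` is exactly the set of indices of rank `r`. -/
theorem frontiers_eq_rank_levels {n : ℕ} {α : Type*} [LinearOrder α]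
    (A : Fin n → α) (F : ℕ → Set (Fin n))
    (h1 : F 1 = {i : Fin n | ∀ j : Fin n, j < i → A i ≤ A j})
    (hstep : ∀ r : ℕ, 1 ≤ r → F (r + 1) =
      {i : Fin n | (∀ s : ℕ, 1 ≤ s → s ≤ r → i ∉ F s) ∧
        ∀ j : Fin n, j < i → (∀ s : ℕ, 1 ≤ s → s ≤ r → j ∉ F s) → A i ≤ A j}) :
    ∀ r : ℕ, 1 ≤ r → F r = {i : Fin n | lisRank A i = r} := by
  suffices h : ∀ r, F (r + 1) = {i | lisRank A i = r + 1} by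
    intro r hr
    simpa [Nat.sub_add_cancel hr] using h (r - 1)
  intro r
  induction r using Nat.strong_induction_on with
  | _ r ih =>
    ext i
    rcases Nat.eq_zero_or_pos r with rfl | hr
    · simp [h1, lisRank_eq_succ_iff, lisRank_pos]
    have hF : ∀ s, 1 ≤ s → s ≤ r → F s = {i | lisRank A i = s} := fun s hs hsr => by
      simpa [Nat.sub_add_cancel hs] using ih (s - 1) (by omega)
    simp only [hstep r hr, Set.mem_ofPred_eq, lisRank_eq_succ_iff,
      forall_notMem_iff_lt_lisRank hF]
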